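/- Let G be a simple graph on vertices indexed 1..n, and let f̂ be the ARROneNS estimator in which, conditional on the randomness of E' (each pair independently in E' with probability μ if an edge and μρ otherwise), the count tᵢ = Σ_{j<k<i} a_{i,j}a_{i,k}·1[(v_j,v_k) ∈ E']·1[(v_i,v_k) ∈ E']. Then the estimator f̂(G) = (1/(μ²(1−ρ)))·Σᵢ(tᵢ − μ²ρ·sᵢ) is unbiased: E[f̂(G)] = f_△(G). -/
import Mathlib


open Real Finset

/-- Ordered pairs `(j,k)` of vertices with `j < k`. -/
abbrev OPair (n : ℕ) := {p : Fin n × Fin n // p.1 < p.2}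

/-- Membership of the unordered pair `{j,k}` in the noisy edge set `E'`. -/
def memE {n : ℕ} (E' : OPair n → Bool) (j k : Fin n) : Bool :=
  if h : j < k then E' ⟨(j, k), h⟩
  else if h' : k < j then E' ⟨(k, j), h'⟩ else false

/-- Inclusion probability of pair `p` in the noisy edge set. -/
noncomputable def incProb (n : ℕ) (a : Fin n → Fin n → Bool) (μ ρ : ℝ)
    (p : OPair n) : ℝ :=
  if a p.1.1 p.1.2 then μ else μ * ρ

/-- Probability of a noisy edge configuration `E'` (independent inclusions). -/
noncomputable def confProb (n : ℕ) (a : Fin n → Fin n → Bool) (μ ρ : ℝ)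
    (E' : OPair n → Bool) : ℝ :=
  ∏ p : OPair n, if E' p then incProb n a μ ρ p else 1 - incProb n a μ ρ p

/-- `tᵢ` for `ARROneNS`: noisy triangles `(vᵢ,vⱼ,vₖ)` with `j<k<i`,
`(vⱼ,vₖ) ∈ E'` and `(vᵢ,vₖ) ∈ E'`. -/
def tCountOne (n : ℕ) (a : Fin n → Fin n → Bool) (E' : OPair n → Bool)
    (i : Fin n) : ℝ :=
  ∑ p : OPair n,
    if p.1.2 < i ∧ a i p.1.1 = true ∧ a i p.1.2 = true ∧
        memE E' p.1.1 p.1.2 = true ∧ memE E' p.1.2 i = true then 1 else 0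

/-- `sᵢ`: number of pairs `j<k<i` of neighbors of `vᵢ`. -/
def sCount (n : ℕ) (a : Fin n → Fin n → Bool) (i : Fin n) : ℝ :=
  ∑ p : OPair n, if p.1.2 < i ∧ a i p.1.1 = true ∧ a i p.1.2 = true then 1 else 0

/-- The triangle count of `G`. -/
def triCount (n : ℕ) (a : Fin n → Fin n → Bool) : ℝ :=
  ∑ i : Fin n, ∑ p : OPair n,
    if p.1.2 < i ∧ a i p.1.1 = true ∧ a i p.1.2 = true ∧ a p.1.1 p.1.2 = true
    then 1 else 0

lemma sum_prod_fun {n : ℕ} (w : OPair n → Bool → ℝ) :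
    ∑ E' : OPair n → Bool, ∏ r : OPair n, w r (E' r)
      = ∏ r : OPair n, (w r true + w r false) := by
  have h : (Finset.univ : Finset (OPair n → Bool))
      = Fintype.piFinset (fun _ => (Finset.univ : Finset Bool)) :=
    (Fintype.piFinset_univ).symm
  rw [h, ← Finset.prod_univ_sum]
  exact Finset.prod_congr rfl fun r _ => by simp [Fintype.sum_bool]

lemma pair_exp {n : ℕ} (a : Fin n → Fin n → Bool) (μ ρ : ℝ) (p q : OPair n)
    (hpq : p ≠ q) :
    ∑ E' : OPair n → Bool, confProb n a μ ρ E' *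
        ((if E' p then (1:ℝ) else 0) * (if E' q then (1:ℝ) else 0))
      = incProb n a μ ρ p * incProb n a μ ρ q := by
  set w : OPair n → Bool → ℝ := fun r b =>
    (if b then incProb n a μ ρ r else 1 - incProb n a μ ρ r) *
      ((if r = p then (if b then (1:ℝ) else 0) else 1) *
       (if r = q then (if b then (1:ℝ) else 0) else 1)) with hw
  have key : ∀ E' : OPair n → Bool,
      confProb n a μ ρ E' *
        ((if E' p then (1:ℝ) else 0) * (if E' q then (1:ℝ) else 0))
        = ∏ r : OPair n, w r (E' r) := by
    intro E'
    simp only [hw, confProb, Finset.prod_mul_distrib]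
    congr 1
    rw [Finset.prod_ite_eq' Finset.univ p (fun r => if E' r then (1:ℝ) else 0),
      Finset.prod_ite_eq' Finset.univ q (fun r => if E' r then (1:ℝ) else 0)]
    simp
  rw [Finset.sum_congr rfl fun E' _ => key E', sum_prod_fun]
  have h2 : ∀ r : OPair n, w r true + w r false
      = (if r = p then incProb n a μ ρ r else 1) *
        (if r = q then incProb n a μ ρ r else 1) := by
    intro r
    simp only [hw]
    by_cases h1 : r = p <;> by_cases h2 : r = q <;>
      simp [h1, h2, hpq, Ne.symm hpq]
  rw [Finset.prod_congr rfl fun r _ => h2 r, Finset.prod_mul_distrib,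
    Finset.prod_ite_eq' Finset.univ p, Finset.prod_ite_eq' Finset.univ q]
  simp

lemma sum_confProb {n : ℕ} (a : Fin n → Fin n → Bool) (μ ρ : ℝ) :
    ∑ E' : OPair n → Bool, confProb n a μ ρ E' = 1 := by
  have h := sum_prod_fun (fun (r : OPair n) (b : Bool) =>
    if b then incProb n a μ ρ r else 1 - incProb n a μ ρ r)
  simpa [confProb] using h

/-- Expectation of `tᵢ`. -/
lemma exp_t {n : ℕ} (a : Fin n → Fin n → Bool)
    (hsymm : ∀ i j, a i j = a j i) (μ ρ : ℝ) (i : Fin n) :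
    ∑ E' : OPair n → Bool, confProb n a μ ρ E' * tCountOne n a E' i
      = ∑ p : OPair n,
          if p.1.2 < i ∧ a i p.1.1 = true ∧ a i p.1.2 = true then
            (if a p.1.1 p.1.2 then μ else μ * ρ) * μ else 0 := by
  simp only [tCountOne, Finset.mul_sum]
  rw [Finset.sum_comm]
  refine Finset.sum_congr rfl fun p _ => ?_
  by_cases h3 : p.1.2 < i ∧ a i p.1.1 = true ∧ a i p.1.2 = true
  · obtain ⟨h1, h2a, h2b⟩ := h3
    set q : OPair n := ⟨(p.1.2, i), h1⟩ with hq
    have hpq : p ≠ q := by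
      intro h
      have : p.1.1 = p.1.2 := by rw [hq] at h; exact congrArg (fun x => x.1.1) h
      exact absurd (this ▸ p.2) (lt_irrefl _)
    have hmem1 : ∀ E' : OPair n → Bool, memE E' p.1.1 p.1.2 = E' p := by
      intro E'; simp only [memE]; rw [dif_pos p.2]
    have hmem2 : ∀ E' : OPair n → Bool, memE E' p.1.2 i = E' q := by
      intro E'; simp only [memE]; rw [dif_pos h1]
    have hind : ∀ E' : OPair n → Bool,
        (if p.1.2 < i ∧ a i p.1.1 = true ∧ a i p.1.2 = true ∧
            memE E' p.1.1 p.1.2 = true ∧ memE E' p.1.2 i = true then (1:ℝ) else 0)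
        = (if E' p then (1:ℝ) else 0) * (if E' q then (1:ℝ) else 0) := by
      intro E'
      rw [hmem1, hmem2]
      by_cases hp : E' p = true <;> by_cases hqq : E' q = true <;>
        simp [h1, h2a, h2b, hp, hqq]
    calc ∑ E' : OPair n → Bool, confProb n a μ ρ E' *
            (if p.1.2 < i ∧ a i p.1.1 = true ∧ a i p.1.2 = true ∧
              memE E' p.1.1 p.1.2 = true ∧ memE E' p.1.2 i = true then (1:ℝ) else 0)
        = ∑ E' : OPair n → Bool, confProb n a μ ρ E' *
            ((if E' p then (1:ℝ) else 0) * (if E' q then (1:ℝ) else 0)) := by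
          exact Finset.sum_congr rfl fun E' _ => by rw [hind E']
      _ = incProb n a μ ρ p * incProb n a μ ρ q := pair_exp a μ ρ p q hpq
      _ = _ := by
          have haq : a q.1.1 q.1.2 = true := by
            rw [hq]; simpa using (hsymm i p.1.2) ▸ h2b
          simp [incProb, haq, h1, h2a, h2b]
  · have : ∀ E' : OPair n → Bool,
        confProb n a μ ρ E' *
          (if p.1.2 < i ∧ a i p.1.1 = true ∧ a i p.1.2 = true ∧
            memE E' p.1.1 p.1.2 = true ∧ memE E' p.1.2 i = true then (1:ℝ) else 0) = 0 := by
      intro E'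
      rw [if_neg (fun hc => h3 ⟨hc.1, hc.2.1, hc.2.2.1⟩), mul_zero]
    rw [Finset.sum_congr rfl fun E' _ => this E', Finset.sum_const_zero, if_neg h3]

/-- Unbiasedness of the `ARROneNS` triangle estimator:
`E[(1/(μ²(1-ρ))) Σᵢ (tᵢ - μ²ρ sᵢ)] = f_△(G)`. -/
theorem arronens_unbiased (n : ℕ) (a : Fin n → Fin n → Bool)
    (hsymm : ∀ i j, a i j = a j i)
    (μ ρ : ℝ) (hμ0 : 0 < μ) (hμ1 : μ < 1) (hρ0 : 0 < ρ) (hρ1 : ρ < 1) :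
    (∑ E' : OPair n → Bool,
        confProb n a μ ρ E' *
          ((1 / (μ ^ 2 * (1 - ρ))) *
            ∑ i : Fin n, (tCountOne n a E' i - μ ^ 2 * ρ * sCount n a i)))
      = triCount n a := by
  have hne : μ ^ 2 * (1 - ρ) ≠ 0 :=
    mul_ne_zero (pow_ne_zero 2 hμ0.ne') (by linarith)
  -- pull the constant out
  have step1 : (∑ E' : OPair n → Bool,
        confProb n a μ ρ E' *
          ((1 / (μ ^ 2 * (1 - ρ))) *
            ∑ i : Fin n, (tCountOne n a E' i - μ ^ 2 * ρ * sCount n a i)))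
      = (1 / (μ ^ 2 * (1 - ρ))) *
          ∑ i : Fin n, ((∑ E' : OPair n → Bool,
              confProb n a μ ρ E' * tCountOne n a E' i)
            - μ ^ 2 * ρ * sCount n a i) := by
    rw [Finset.mul_sum]
    rw [show (∑ E' : OPair n → Bool,
        confProb n a μ ρ E' *
          ((1 / (μ ^ 2 * (1 - ρ))) *
            ∑ i : Fin n, (tCountOne n a E' i - μ ^ 2 * ρ * sCount n a i)))
      = ∑ E' : OPair n → Bool, ∑ i : Fin n, (1 / (μ ^ 2 * (1 - ρ))) *
          (confProb n a μ ρ E' * tCountOne n a E' i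
            - confProb n a μ ρ E' * (μ ^ 2 * ρ * sCount n a i)) from
      Finset.sum_congr rfl fun E' _ => by rw [Finset.mul_sum, Finset.mul_sum]; congr 1; funext i; ring]
    rw [Finset.sum_comm]
    refine Finset.sum_congr rfl fun i _ => ?_
    rw [← Finset.mul_sum, Finset.sum_sub_distrib, ← Finset.sum_mul, sum_confProb, one_mul]
  rw [step1]
  -- per-vertex computation
  have step2 : ∀ i : Fin n,
      ((∑ E' : OPair n → Bool, confProb n a μ ρ E' * tCountOne n a E' i)
          - μ ^ 2 * ρ * sCount n a i)
        = (μ ^ 2 * (1 - ρ)) * ∑ p : OPair n,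
            if p.1.2 < i ∧ a i p.1.1 = true ∧ a i p.1.2 = true ∧
              a p.1.1 p.1.2 = true then (1:ℝ) else 0 := by
    intro i
    rw [exp_t a hsymm μ ρ i, sCount, Finset.mul_sum, Finset.mul_sum,
      ← Finset.sum_sub_distrib]
    refine Finset.sum_congr rfl fun p _ => ?_
    by_cases h3 : p.1.2 < i ∧ a i p.1.1 = true ∧ a i p.1.2 = true
    · by_cases h4 : a p.1.1 p.1.2 = true
      · rw [if_pos h3, if_pos h4, if_pos h3, if_pos ⟨h3.1, h3.2.1, h3.2.2, h4⟩]; ring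
      · rw [if_pos h3, if_neg h4, if_pos h3,
          if_neg (fun hc => h4 hc.2.2.2)]; ring
    · rw [if_neg h3, if_neg h3, if_neg (fun hc => h3 ⟨hc.1, hc.2.1, hc.2.2.1⟩)]; ring
  rw [Finset.sum_congr rfl fun i _ => step2 i, ← Finset.mul_sum, triCount, ← mul_assoc,
    one_div_mul_cancel hne, one_mul]
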